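/- There exists a constant c₀ > 0, depending only on d, such that for every integer L ≥ 1, every z ∈ ℤ^d and every starting point x ∈ ℤ^d, with B = z + {0,1,…,L−1}^d one has E_x[ exp( (c₀/L²) · #( {X_n : n ≥ 0} ∩ B ) ) ] ≤ 2, i.e. the exponential moment of c₀/L² times the number of sites of the box B visited by the walk is at most 2, uniformly in the box and the starting point. (Lemma 1.1, inequality (1.5).) -/

import Mathlib

open MeasureTheory ProbabilityTheory ENNReal

/-- The box `z + {0,…,L-1}^d` in `ℤ^d`. -/
def latticeBox (d : ℕ) (z : Fin d → ℤ) (L : ℕ) : Set (Fin d → ℤ) :=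
  {x | ∀ i, z i ≤ x i ∧ x i < z i + L}

/-- The distribution of a single step of the simple random walk on `ℤ^d`:
the uniform measure on the `2d` unit vectors `±eᵢ`. -/
noncomputable def srwStep (d : ℕ) : Measure (Fin d → ℤ) :=
  (2 * d : ℝ≥0∞)⁻¹ • ∑ i : Fin d,
    (Measure.dirac (Pi.single i 1) + Measure.dirac (-Pi.single i 1))

/-!
Put `a = (2d + 40) L²` and `H(y) = 1 + √(a / (a + |y - z|²))`, so that `1 ≤ H ≤ 2`. For `d ≥ 3`
a fourth-order Taylor bound for `t ↦ t^(-1/2)` shows that `w ↦ (a + |w|²)^(-1/2)` is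
superharmonic on `ℤ^d`, with discrete Laplacian at most `-a (a + |w|²)^(-5/2)`. On the box
`a + |y - z|² ≤ 3a/2`, so there the mean of `H` over the neighbours of `y` is at most
`H(y) - 1/(8da)`, which absorbs a factor `e^λ` for `λ = c₀/L²`. Hence
`e^(λ 1_B(y)) E_y[H(X₁)] ≤ H(y)` everywhere, and by independence of the increments
`E_x[(∏_{k<n} e^(λ 1_B(X_k))) H(X_n)] ≤ H(x) ≤ 2` for every `n`. The product dominates
`e^(λ #(range X ∩ B))` once every visited site of `B` has been reached before time `n`, and
monotone convergence concludes.
-/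

lemma inv_sqrt_one_add_le {x : ℝ} (hx : |x| ≤ 1 / 2) :
    (√(1 + x))⁻¹ ≤ 1 - x / 2 + 3 / 8 * x ^ 2 - 5 / 16 * x ^ 3 + x ^ 4 := by
  obtain ⟨hx₁, hx₂⟩ := abs_le.1 hx
  have hx₃ : 0 ≤ x ^ 2 * (x + 1 / 2) := mul_nonneg (sq_nonneg x) (by linarith)
  have hq : 0 ≤ 93 / 64 + 39 / 32 * x - 99 / 256 * x ^ 2 + 57 / 256 * x ^ 3 + 3 / 8 * x ^ 4
      + x ^ 5 := by
    nlinarith [sq_nonneg x, sq_nonneg (x ^ 2)]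
  have hp : 0 ≤ 1 - x / 2 + 3 / 8 * x ^ 2 - 5 / 16 * x ^ 3 + x ^ 4 := by
    nlinarith [sq_nonneg x, sq_nonneg (x ^ 2)]
  -- the square of the right-hand side times `1 + x`, minus `1`, is `x⁴` times the polynomial `hq`
  have hsq : 1 ≤ (1 - x / 2 + 3 / 8 * x ^ 2 - 5 / 16 * x ^ 3 + x ^ 4) ^ 2 * (1 + x) := by
    nlinarith [mul_nonneg (pow_nonneg (sq_nonneg x) 2) hq]
  rw [← Real.sqrt_inv, Real.sqrt_le_iff]
  exact ⟨hp, (inv_le_iff_one_le_mul₀' (by linarith)).2 (by linarith)⟩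

lemma inv_sqrt_add_le {t h : ℝ} (ht : 0 < t) (hh : |h| ≤ t / 2) :
    (√(t + h))⁻¹ ≤
      (√t)⁻¹ * (1 - h / t / 2 + 3 / 8 * (h / t) ^ 2 - 5 / 16 * (h / t) ^ 3 + (h / t) ^ 4) := by
  have hx : |h / t| ≤ 1 / 2 := by
    rw [abs_div, abs_of_pos ht, div_le_iff₀ ht]; linarith
  calc (√(t + h))⁻¹ = (√t)⁻¹ * (√(1 + h / t))⁻¹ := by
        rw [← mul_inv, ← Real.sqrt_mul ht.le, mul_add, mul_one, mul_div_cancel₀ _ ht.ne']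
    _ ≤ _ := mul_le_mul_of_nonneg_left (inv_sqrt_one_add_le hx) (by positivity)

lemma inv_sqrt_add_add_inv_sqrt_sub_le {t w : ℝ} (hw : 2 * (1 + 2 * |w|) ≤ t) :
    (√(t + (1 + 2 * w)))⁻¹ + (√(t + (1 - 2 * w)))⁻¹ ≤
      (√t)⁻¹ * (2 - 1 / t + (3 / 4 + 3 * w ^ 2) / t ^ 2 - (5 / 8 + 15 / 2 * w ^ 2) / t ^ 3
        + (2 + 48 * w ^ 2 + 32 * w ^ 4) / t ^ 4) := by
  have ht : 0 < t := by linarith [abs_nonneg w]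
  have hplus : |1 + 2 * w| ≤ t / 2 := by
    have := abs_add_le 1 (2 * w); rw [abs_one, abs_mul, abs_two] at this; linarith
  have hminus : |1 - 2 * w| ≤ t / 2 := by
    have := abs_sub (1 : ℝ) (2 * w); rw [abs_one, abs_mul, abs_two] at this; linarith
  refine (add_le_add (inv_sqrt_add_le ht hplus) (inv_sqrt_add_le ht hminus)).trans_eq ?_
  field_simp
  ring

lemma quartic_bracket_nonpos {n a t W : ℝ} (hn : 3 ≤ n) (ha : 2 * n + 40 ≤ a) (hat : a ≤ t)
    (hW : W ≤ (t - a) ^ 2) :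
    (3 - n) * t ^ 3 + (3 * n / 4 - 2 * a - 15 / 2) * t ^ 2 + (15 / 2 * a - 5 * n / 8 + 48) * t
      + 2 * n - 48 * a + 32 * W ≤ 0 := by
  have ht : 0 < t := by linarith
  have hta : 0 ≤ t - a := by linarith
  nlinarith [mul_nonneg (mul_nonneg (by linarith : (0 : ℝ) ≤ n - 3) ht.le) (mul_nonneg ht.le ht.le),
    mul_nonneg hta ht.le, mul_nonneg (mul_nonneg hta ht.le) ht.le,
    mul_nonneg (by linarith : (0 : ℝ) ≤ a) hta, sq_nonneg (t - a), mul_pos ht ht]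

lemma sum_inv_sqrt_add_add_inv_sqrt_sub_le {ι : Type*} [Fintype ι] (hι : 3 ≤ Fintype.card ι)
    {a : ℝ} (ha : 2 * Fintype.card ι + 40 ≤ a) (w : ι → ℝ) :
    ∑ i, ((√(a + ∑ j, w j ^ 2 + (1 + 2 * w i)))⁻¹ + (√(a + ∑ j, w j ^ 2 + (1 - 2 * w i)))⁻¹) ≤
      (√(a + ∑ j, w j ^ 2))⁻¹ * (2 * Fintype.card ι - a / (a + ∑ j, w j ^ 2) ^ 2) := by
  set n : ℝ := (Fintype.card ι : ℝ)
  set W₂ := ∑ j, w j ^ 2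
  set W₄ := ∑ j, w j ^ 4
  set t := a + W₂
  have hn : (3 : ℝ) ≤ n := by simp only [n]; exact_mod_cast hι
  have hW₂ : 0 ≤ W₂ := by positivity
  have hat : a ≤ t := by linarith
  have ht : 0 < t := by linarith
  have hW₄ : W₄ ≤ (t - a) ^ 2 := by
    simpa [t, W₄, ← pow_mul] using Finset.sum_sq_le_sq_sum_of_nonneg (s := Finset.univ)
      (f := fun j => w j ^ 2) (fun j _ => sq_nonneg (w j))
  have hw : ∀ i, 2 * (1 + 2 * |w i|) ≤ t := fun i => by
    have : w i ^ 2 ≤ W₂ := Finset.single_le_sum (fun j _ => sq_nonneg (w j)) (Finset.mem_univ i)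
    nlinarith [sq_abs (w i), sq_nonneg (|w i| - 2)]
  have hsum : ∑ i, (2 - 1 / t + (3 / 4 + 3 * w i ^ 2) / t ^ 2 - (5 / 8 + 15 / 2 * w i ^ 2) / t ^ 3
        + (2 + 48 * w i ^ 2 + 32 * w i ^ 4) / t ^ 4) =
      2 * n - a / t ^ 2 + ((3 - n) * t ^ 3 + (3 * n / 4 - 2 * a - 15 / 2) * t ^ 2
        + (15 / 2 * a - 5 * n / 8 + 48) * t + 2 * n - 48 * a + 32 * W₄) / t ^ 4 := by
    have hterm : ∀ i, 2 - 1 / t + (3 / 4 + 3 * w i ^ 2) / t ^ 2 - (5 / 8 + 15 / 2 * w i ^ 2) / t ^ 3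
        + (2 + 48 * w i ^ 2 + 32 * w i ^ 4) / t ^ 4 =
          (2 - 1 / t + 3 / 4 / t ^ 2 - 5 / 8 / t ^ 3 + 2 / t ^ 4)
          + (3 / t ^ 2 - 15 / 2 / t ^ 3 + 48 / t ^ 4) * w i ^ 2 + 32 / t ^ 4 * w i ^ 4 :=
      fun i => by ring
    simp only [hterm, Finset.sum_add_distrib, Finset.sum_const, Finset.card_univ, nsmul_eq_mul,
      ← Finset.mul_sum]
    rw [show ∑ i, w i ^ 2 = t - a by simp [t, W₂], show ∑ i, w i ^ 4 = W₄ from rfl]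
    field_simp
    ring
  calc _ ≤ ∑ i, (√t)⁻¹ * (2 - 1 / t + (3 / 4 + 3 * w i ^ 2) / t ^ 2
        - (5 / 8 + 15 / 2 * w i ^ 2) / t ^ 3 + (2 + 48 * w i ^ 2 + 32 * w i ^ 4) / t ^ 4) :=
        Finset.sum_le_sum fun i _ => inv_sqrt_add_add_inv_sqrt_sub_le (hw i)
    _ ≤ (√t)⁻¹ * (2 * n - a / t ^ 2) := by
        rw [← Finset.mul_sum, hsum]
        gcongr
        exact add_le_of_nonpos_right
          (div_nonpos_of_nonpos_of_nonneg (quartic_bracket_nonpos hn ha hat hW₄) (by positivity))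

section Potential

variable {ι : Type*} [Fintype ι]

noncomputable def invSqrtPotential (a : ℝ) (w : ι → ℤ) : ℝ :=
  √a * (√(a + ∑ i, (w i : ℝ) ^ 2))⁻¹

lemma sum_sq_add_single [DecidableEq ι] (w : ι → ℤ) (i : ι) (ε : ℤ) :
    ∑ j, ((w + Pi.single i ε : ι → ℤ) j : ℝ) ^ 2 = ∑ j, (w j : ℝ) ^ 2 + (2 * w i * ε + ε ^ 2) := by
  rw [← sub_eq_iff_eq_add', ← Finset.sum_sub_distrib,
    Finset.sum_eq_single_of_mem i (Finset.mem_univ i) fun j _ hj => by simp [hj]]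
  simp only [Pi.add_apply, Pi.single_eq_same]
  push_cast
  ring

variable {a : ℝ}

lemma invSqrtPotential_nonneg (w : ι → ℤ) : 0 ≤ invSqrtPotential a w := by
  unfold invSqrtPotential; positivity

lemma sq_invSqrtPotential (ha : 0 ≤ a) (w : ι → ℤ) :
    invSqrtPotential a w ^ 2 = a / (a + ∑ i, (w i : ℝ) ^ 2) := by
  rw [invSqrtPotential, mul_pow, inv_pow, Real.sq_sqrt ha, Real.sq_sqrt (by positivity),
    div_eq_mul_inv]

lemma invSqrtPotential_le_one (ha : 0 ≤ a) (w : ι → ℤ) : invSqrtPotential a w ≤ 1 := by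
  rw [← abs_of_nonneg (invSqrtPotential_nonneg w), ← sq_le_one_iff_abs_le_one,
    sq_invSqrtPotential ha]
  exact div_le_one_of_le₀ (le_add_of_nonneg_right (by positivity)) (by positivity)

lemma one_fourth_le_invSqrtPotential_pow_five (ha : 0 < a) (w : ι → ℤ)
    (hw : 2 * ∑ i, (w i : ℝ) ^ 2 ≤ a) : 1 / 4 ≤ invSqrtPotential a w ^ 5 := by
  have h₀ := invSqrtPotential_nonneg (a := a) w
  have h₁ := invSqrtPotential_le_one ha.le w
  have h₂ : 2 / 3 ≤ invSqrtPotential a w ^ 2 := by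
    rw [sq_invSqrtPotential ha.le, le_div_iff₀ (by positivity)]; linarith
  calc (1 : ℝ) / 4 ≤ (2 / 3) ^ 3 := by norm_num
    _ ≤ (invSqrtPotential a w ^ 2) ^ 3 := by gcongr
    _ ≤ invSqrtPotential a w ^ 5 := by
      rw [← pow_mul]; exact pow_le_pow_of_le_one h₀ h₁ (by norm_num)

lemma sum_invSqrtPotential_add_sub_single_le [DecidableEq ι] (hι : 3 ≤ Fintype.card ι)
    (ha : 2 * Fintype.card ι + 40 ≤ a) (w : ι → ℤ) :
    ∑ i, (invSqrtPotential a (w + Pi.single i 1) + invSqrtPotential a (w - Pi.single i 1)) ≤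
      2 * Fintype.card ι * invSqrtPotential a w - invSqrtPotential a w ^ 5 / a := by
  set t := a + ∑ j, (w j : ℝ) ^ 2
  have ha₀ : 0 < a := by linarith
  have ht : 0 < t := by positivity
  have hshift : ∀ i,
      invSqrtPotential a (w + Pi.single i 1) + invSqrtPotential a (w - Pi.single i 1)
      = √a * ((√(t + (1 + 2 * w i)))⁻¹ + (√(t + (1 - 2 * w i)))⁻¹) := fun i => by
    rw [sub_eq_add_neg, ← Pi.single_neg]
    simp only [invSqrtPotential, sum_sq_add_single, t]
    push_cast
    ring_nf
  have hfive : invSqrtPotential a w ^ 5 / a = √a * (√t)⁻¹ * (a / t ^ 2) := by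
    have hsa : √a ^ 2 = a := Real.sq_sqrt ha₀.le
    have hst : √t ^ 2 = t := Real.sq_sqrt ht.le
    have : 0 < √t := Real.sqrt_pos.2 ht
    have h : (√a * (√t)⁻¹) ^ 5 = (√a ^ 2) ^ 2 * √a * ((√t ^ 2) ^ 2)⁻¹ * (√t)⁻¹ := by ring
    rw [invSqrtPotential, h, hsa, hst]
    field_simp
  rw [Finset.sum_congr rfl fun i _ => hshift i, ← Finset.mul_sum, hfive]
  calc _ ≤ √a * ((√t)⁻¹ * (2 * Fintype.card ι - a / t ^ 2)) := by
        gcongr; exact sum_inv_sqrt_add_add_inv_sqrt_sub_le hι ha (fun i => (w i : ℝ))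
    _ = _ := by unfold invSqrtPotential; ring

end Potential

section IndependentIncrements

variable {Ω E : Type*} [MeasurableSpace Ω] [mE : MeasurableSpace E] {P : Measure Ω}

lemma lintegral_comp_eq_lintegral_lintegral_map {α : Type*} [MeasurableSpace α]
    [IsFiniteMeasure P] {Y : Ω → α} {ξ : Ω → E} (hY : Measurable Y) (hξ : Measurable ξ)
    (hind : IndepFun Y ξ P) {g : α → E → ℝ≥0∞} (hg : Measurable (Function.uncurry g)) :
    ∫⁻ ω, g (Y ω) (ξ ω) ∂P = ∫⁻ ω, ∫⁻ e, g (Y ω) e ∂(P.map ξ) ∂P :=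
  calc ∫⁻ ω, g (Y ω) (ξ ω) ∂P = ∫⁻ p, Function.uncurry g p ∂(P.map fun ω => (Y ω, ξ ω)) :=
        (lintegral_map hg (hY.prodMk hξ)).symm
    _ = ∫⁻ p, Function.uncurry g p ∂((P.map Y).prod (P.map ξ)) := by
        rw [(indepFun_iff_map_prod_eq_prod_map_map hY.aemeasurable hξ.aemeasurable).1 hind]
    _ = ∫⁻ y, ∫⁻ e, g y e ∂(P.map ξ) ∂(P.map Y) := lintegral_prod _ hg.aemeasurable
    _ = _ := lintegral_map hg.lintegral_prod_right' hY

lemma indep_iSup_comap_Iio {ξ : ℕ → Ω → E} (hξ : ∀ n, Measurable (ξ n)) (hind : iIndepFun ξ P)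
    (n : ℕ) : Indep (⨆ j ∈ Set.Iio n, mE.comap (ξ j)) (mE.comap (ξ n)) P := by
  have h := indep_iSup_of_disjoint (S := Set.Iio n) (T := {n}) (fun j => (hξ j).comap_le)
    hind.iIndep (Set.disjoint_singleton_right.2 (lt_irrefl n))
  exact indep_of_indep_of_le_right h
    (le_iSup₂ (f := fun j (_ : j ∈ ({n} : Set ℕ)) => mE.comap (ξ j)) n rfl)

end IndependentIncrements

def randomWalk {Ω E : Type*} [AddCommMonoid E] (x : E) (ξ : ℕ → Ω → E) (n : ℕ) (ω : Ω) : E :=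
  x + ∑ k ∈ Finset.range n, ξ k ω

section LyapunovBound

variable {Ω E : Type*} [mE : MeasurableSpace E] [AddCommMonoid E] [MeasurableAdd₂ E]
  {ξ : ℕ → Ω → E}

lemma measurable_randomWalk_of_le (x : E) {k n : ℕ} (hk : k ≤ n) :
    Measurable[⨆ j ∈ Set.Iio n, mE.comap (ξ j)] (randomWalk x ξ k) := by
  refine measurable_const.add (Finset.measurable_sum _ fun j hj => ?_)
  exact (comap_measurable (ξ j)).mono
    (le_iSup₂ (f := fun j (_ : j ∈ Set.Iio n) => mE.comap (ξ j)) j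
      ((Finset.mem_range.1 hj).trans_le hk)) le_rfl

variable [mΩ : MeasurableSpace Ω] {P : Measure Ω} [IsProbabilityMeasure P] {μ : Measure E}
  {ρ H : E → ℝ≥0∞}

lemma lintegral_prod_mul_succ_le (hρ : Measurable ρ) (hH : Measurable H)
    (hξ : ∀ n, Measurable (ξ n)) (hind : iIndepFun ξ P) (hlaw : ∀ n, P.map (ξ n) = μ)
    (hdrift : ∀ y, ρ y * ∫⁻ e, H (y + e) ∂μ ≤ H y) (x : E) (n : ℕ) :
    ∫⁻ ω, (∏ k ∈ Finset.range (n + 1), ρ (randomWalk x ξ k ω)) *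
        H (randomWalk x ξ (n + 1) ω) ∂P ≤
      ∫⁻ ω, (∏ k ∈ Finset.range n, ρ (randomWalk x ξ k ω)) * H (randomWalk x ξ n ω) ∂P := by
  have hF : ⨆ j ∈ Set.Iio n, mE.comap (ξ j) ≤ mΩ := iSup₂_le fun j _ => (hξ j).comap_le
  have hY : Measurable[⨆ j ∈ Set.Iio n, mE.comap (ξ j)] fun ω =>
      (∏ k ∈ Finset.range (n + 1), ρ (randomWalk x ξ k ω), randomWalk x ξ n ω) :=
    (Finset.measurable_prod _ fun k hk => hρ.comp (measurable_randomWalk_of_le x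
      (Nat.lt_succ_iff.1 (Finset.mem_range.1 hk)))).prodMk (measurable_randomWalk_of_le x le_rfl)
  have hYξ : IndepFun _ (ξ n) P := (IndepFun_iff_Indep _ _ _).2
    (indep_of_indep_of_le_left (indep_iSup_comap_Iio hξ hind n) hY.comap_le)
  have hstep : ∀ ω, randomWalk x ξ (n + 1) ω = randomWalk x ξ n ω + ξ n ω := fun ω => by
    simp only [randomWalk, Finset.sum_range_succ, add_assoc]
  calc _ = ∫⁻ ω, (∏ k ∈ Finset.range (n + 1), ρ (randomWalk x ξ k ω)) *
          ∫⁻ e, H (randomWalk x ξ n ω + e) ∂μ ∂P := by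
        simp_rw [hstep, ← hlaw n]
        rw [lintegral_comp_eq_lintegral_lintegral_map (g := fun p e => p.1 * H (p.2 + e))
          (hY.mono hF le_rfl) (hξ n) hYξ (by fun_prop)]
        exact lintegral_congr fun ω => lintegral_const_mul _ (hH.comp (measurable_const_add _))
    _ ≤ _ := lintegral_mono fun ω => by
        rw [Finset.prod_range_succ, mul_assoc]
        exact mul_le_mul_right (hdrift _) _

lemma lintegral_prod_mul_le (hρ : Measurable ρ) (hH : Measurable H)
    (hξ : ∀ n, Measurable (ξ n)) (hind : iIndepFun ξ P) (hlaw : ∀ n, P.map (ξ n) = μ)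
    (hdrift : ∀ y, ρ y * ∫⁻ e, H (y + e) ∂μ ≤ H y) (x : E) (n : ℕ) :
    ∫⁻ ω, (∏ k ∈ Finset.range n, ρ (randomWalk x ξ k ω)) * H (randomWalk x ξ n ω) ∂P ≤ H x := by
  induction n with
  | zero => simp [randomWalk]
  | succ n ih => exact (lintegral_prod_mul_succ_le hρ hH hξ hind hlaw hdrift x n).trans ih

lemma lintegral_iSup_prod_le (hρ : Measurable ρ) (hH : Measurable H)
    (hξ : ∀ n, Measurable (ξ n)) (hind : iIndepFun ξ P) (hlaw : ∀ n, P.map (ξ n) = μ)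
    (hdrift : ∀ y, ρ y * ∫⁻ e, H (y + e) ∂μ ≤ H y) (hρ₁ : ∀ y, 1 ≤ ρ y)
    (hH₁ : ∀ y, 1 ≤ H y) (x : E) :
    ∫⁻ ω, ⨆ n, ∏ k ∈ Finset.range n, ρ (randomWalk x ξ k ω) ∂P ≤ H x := by
  rw [lintegral_iSup (f := fun n ω => ∏ k ∈ Finset.range n, ρ (randomWalk x ξ k ω))
      (fun n => Finset.measurable_prod _ fun k _ =>
        hρ.comp (measurable_const.add (Finset.measurable_sum _ fun j _ => hξ j)))
    fun m n hmn ω => Finset.prod_le_prod_of_subset_of_one_le' (Finset.range_subset_range.2 hmn)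
      fun k _ _ => hρ₁ _]
  exact iSup_le fun n => (lintegral_mono fun ω => le_mul_of_one_le_right' (hH₁ _)).trans
    (lintegral_prod_mul_le hρ hH hξ hind hlaw hdrift x n)

end LyapunovBound

lemma pow_ncard_range_inter_le_iSup_prod {E : Type*} (s : ℕ → E) (B : Set E)
    [DecidablePred (· ∈ B)] {r : ℝ≥0∞} (hr : 1 ≤ r) :
    r ^ (Set.range s ∩ B).ncard ≤ ⨆ n, ∏ k ∈ Finset.range n, if s k ∈ B then r else 1 := by
  classical
  by_cases hfin : (Set.range s ∩ B).Finite
  · obtain ⟨n, hn⟩ : ∃ n, ((hfin.toFinset : Finset E) : Set E) ⊆ s '' Set.Iio n :=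
      Directed.exists_mem_subset_of_finset_subset_biUnion
        (Monotone.directed_le fun m n hmn => Set.image_mono (Set.Iio_subset_Iio hmn))
        (by rw [hfin.coe_toFinset, ← Set.image_iUnion, Set.iUnion_Iio, Set.image_univ]
            exact Set.inter_subset_left)
    rw [hfin.coe_toFinset] at hn
    have hsub : Set.range s ∩ B ⊆ (((Finset.range n).filter (s · ∈ B)).image s : Set E) := by
      rintro y ⟨hys, hyB⟩
      obtain ⟨k, hk, rfl⟩ := hn ⟨hys, hyB⟩
      simpa using ⟨k, ⟨hk, hyB⟩, rfl⟩
    calc r ^ (Set.range s ∩ B).ncard ≤ r ^ ((Finset.range n).filter (s · ∈ B)).card := by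
          gcongr
          exact (Set.ncard_le_ncard hsub (Finset.finite_toSet _)).trans
            ((Set.ncard_coe_finset _).trans_le Finset.card_image_le)
      _ = ∏ k ∈ Finset.range n, if s k ∈ B then r else 1 := by
          rw [Finset.prod_ite, Finset.prod_const, Finset.prod_const_one, mul_one]
      _ ≤ _ := le_iSup (fun n => ∏ k ∈ Finset.range n, if s k ∈ B then r else 1) n
  · rw [Set.Infinite.ncard hfin, pow_zero]
    exact le_iSup_of_le 0 (by simp)

lemma Real.exp_mul_sub_two_mul_le {h c : ℝ} (h₀ : 0 ≤ h) (h₂ : h ≤ 2) (hc : 0 ≤ c) :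
    Real.exp c * (h - 2 * c) ≤ h := by
  have hexp : Real.exp c * (1 - c) ≤ 1 := by
    have := mul_le_mul_of_nonneg_left
      (by linarith [Real.add_one_le_exp (-c)] : 1 - c ≤ Real.exp (-c)) (Real.exp_pos c).le
    rwa [← Real.exp_add, add_neg_cancel, Real.exp_zero] at this
  calc Real.exp c * (h - 2 * c) ≤ Real.exp c * (h * (1 - c)) := by
        gcongr; nlinarith
    _ = h * (Real.exp c * (1 - c)) := by ring
    _ ≤ h := mul_le_of_le_one_right h₀ hexp

lemma lintegral_srwStep (d : ℕ) (f : (Fin d → ℤ) → ℝ≥0∞) (y : Fin d → ℤ) :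
    ∫⁻ e, f (y + e) ∂srwStep d
      = (2 * d : ℝ≥0∞)⁻¹ * ∑ i, (f (y + Pi.single i 1) + f (y - Pi.single i 1)) := by
  simp only [srwStep, lintegral_smul_measure, lintegral_finsetSum_measure, lintegral_add_measure,
    lintegral_dirac, sub_eq_add_neg, smul_eq_mul]

section Box

variable {d L : ℕ}

noncomputable def boxLyapunov (d L : ℕ) (z y : Fin d → ℤ) : ℝ :=
  1 + invSqrtPotential ((2 * d + 40) * L ^ 2) (y - z)

-- chosen so that `2 c₀ / L² = 1 / (8 d a)`, the drift gap of `boxLyapunov` on the box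
noncomputable def rangeExpConst (d : ℕ) : ℝ := (16 * d * (2 * d + 40))⁻¹

lemma rangeExpConst_pos (hd : 0 < d) : 0 < rangeExpConst d := by
  unfold rangeExpConst; positivity

lemma one_le_boxLyapunov (z y : Fin d → ℤ) : 1 ≤ boxLyapunov d L z y :=
  le_add_of_nonneg_right (invSqrtPotential_nonneg _)

lemma boxLyapunov_le_two (z y : Fin d → ℤ) : boxLyapunov d L z y ≤ 2 := by
  have := invSqrtPotential_le_one (a := (2 * d + 40) * L ^ 2) (by positivity) (y - z)
  unfold boxLyapunov; linarith

lemma two_mul_sum_sq_sub_le_of_mem_latticeBox {z y : Fin d → ℤ} (hy : y ∈ latticeBox d z L) :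
    2 * ∑ i, (((y - z) i : ℤ) : ℝ) ^ 2 ≤ (2 * d + 40) * L ^ 2 := by
  have hcoord : ∀ i, (((y - z) i : ℤ) : ℝ) ^ 2 ≤ (L : ℝ) ^ 2 := fun i => by
    obtain ⟨h₁, h₂⟩ := hy i
    have h₁' : (z i : ℝ) ≤ y i := by exact_mod_cast h₁
    have h₂' : (y i : ℝ) < z i + L := by exact_mod_cast h₂
    simp only [Pi.sub_apply, Int.cast_sub]
    exact pow_le_pow_left₀ (by linarith) (by linarith) 2
  calc 2 * ∑ i, (((y - z) i : ℤ) : ℝ) ^ 2 ≤ 2 * (d * L ^ 2) := by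
        gcongr
        simpa using Finset.sum_le_sum fun i (_ : i ∈ Finset.univ) => hcoord i
    _ ≤ _ := by nlinarith [sq_nonneg (L : ℝ)]

lemma sum_boxLyapunov_add_sub_single_le (hd : 3 ≤ d) (hL : 1 ≤ L) (z y : Fin d → ℤ) :
    ∑ i, (boxLyapunov d L z (y + Pi.single i 1) + boxLyapunov d L z (y - Pi.single i 1)) ≤
      2 * d * boxLyapunov d L z y
        - invSqrtPotential ((2 * d + 40) * L ^ 2) (y - z) ^ 5 / ((2 * d + 40) * L ^ 2) := by
  have hL' : (1 : ℝ) ≤ L ^ 2 := by exact_mod_cast Nat.one_le_pow _ _ hL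
  have hsum := sum_invSqrtPotential_add_sub_single_le (a := (2 * d + 40) * L ^ 2)
    (by simpa using hd) (by simp; nlinarith) (y - z)
  simp only [Fintype.card_fin, Finset.sum_add_distrib] at hsum
  simp only [boxLyapunov, add_sub_right_comm, sub_right_comm y, Finset.sum_add_distrib,
    Finset.sum_const, Finset.card_univ, Fintype.card_fin, nsmul_eq_mul]
  linarith

open Classical in
lemma boxLyapunov_drift (hd : 3 ≤ d) (hL : 1 ≤ L) (z y : Fin d → ℤ) :
    (if y ∈ latticeBox d z L then Real.exp (rangeExpConst d / L ^ 2) else 1) *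
      ((2 * d : ℝ)⁻¹ * ∑ i, (boxLyapunov d L z (y + Pi.single i 1)
        + boxLyapunov d L z (y - Pi.single i 1))) ≤ boxLyapunov d L z y := by
  set a : ℝ := (2 * d + 40) * L ^ 2
  set φ := invSqrtPotential a (y - z)
  have hd₀ : (0 : ℝ) < d := by norm_cast; omega
  have ha : 0 < a := by have : 0 < L := hL; positivity
  have hmean : (2 * d : ℝ)⁻¹ * ∑ i, (boxLyapunov d L z (y + Pi.single i 1)
      + boxLyapunov d L z (y - Pi.single i 1)) ≤ boxLyapunov d L z y - φ ^ 5 / (2 * d * a) := by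
    calc _ ≤ (2 * d : ℝ)⁻¹ * (2 * d * boxLyapunov d L z y - φ ^ 5 / a) := by
          gcongr; exact sum_boxLyapunov_add_sub_single_le hd hL z y
      _ = _ := by field_simp
  split_ifs with hy
  · have hgap : 2 * (rangeExpConst d / L ^ 2) ≤ φ ^ 5 / (2 * d * a) :=
      calc 2 * (rangeExpConst d / L ^ 2) = 1 / 4 / (2 * d * a) := by
            unfold rangeExpConst; field_simp; ring
        _ ≤ φ ^ 5 / (2 * d * a) := by
            gcongr
            exact one_fourth_le_invSqrtPotential_pow_five ha _
              (two_mul_sum_sq_sub_le_of_mem_latticeBox hy)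
    calc _ ≤ Real.exp (rangeExpConst d / L ^ 2) *
          (boxLyapunov d L z y - 2 * (rangeExpConst d / L ^ 2)) := by
          gcongr; linarith
      _ ≤ boxLyapunov d L z y :=
          Real.exp_mul_sub_two_mul_le (by linarith [one_le_boxLyapunov (L := L) z y])
            (boxLyapunov_le_two z y) (by unfold rangeExpConst; positivity)
  · have : 0 ≤ φ ^ 5 / (2 * d * a) := by
      have := invSqrtPotential_nonneg (a := a) (y - z); positivity
    linarith

open Classical in
lemma srwStep_boxLyapunov_drift (hd : 3 ≤ d) (hL : 1 ≤ L) (z y : Fin d → ℤ) :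
    (if y ∈ latticeBox d z L then ENNReal.ofReal (Real.exp (rangeExpConst d / L ^ 2)) else 1) *
      ∫⁻ e, ENNReal.ofReal (boxLyapunov d L z (y + e)) ∂srwStep d ≤
      ENNReal.ofReal (boxLyapunov d L z y) := by
  have hH : ∀ y, 0 ≤ boxLyapunov d L z y := fun y => zero_le_one.trans (one_le_boxLyapunov z y)
  have hd₀ : (0 : ℝ) < 2 * d := by norm_cast; omega
  refine le_of_eq_of_le ?_ (ENNReal.ofReal_le_ofReal (boxLyapunov_drift hd hL z y))
  rw [lintegral_srwStep d (fun y => ENNReal.ofReal (boxLyapunov d L z y)),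
    ENNReal.ofReal_mul (by split_ifs <;> positivity), ENNReal.ofReal_mul (by positivity),
    ENNReal.ofReal_sum_of_nonneg fun i _ => by
      linarith [hH (y + Pi.single i 1), hH (y - Pi.single i 1)],
    ENNReal.ofReal_inv_of_pos hd₀]
  simp only [apply_ite ENNReal.ofReal, ENNReal.ofReal_one, ENNReal.ofReal_add (hH _) (hH _)]
  norm_cast

end Box

/-- Lemma 1.1, inequality (1.5): there is a constant `c₀ > 0`, depending only on `d`, such
that for every box `B = z + [0,L)^d` and every starting point `x`, the exponential moment
`E_x[exp((c₀/L²)·|range(X) ∩ B|)]` of the number of sites of `B` visited by the walk is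
at most `2`. -/
theorem srw_exp_range_in_box_le_two (d : ℕ) (hd : 3 ≤ d) :
    ∃ c₀ : ℝ, 0 < c₀ ∧
      ∀ (L : ℕ), 1 ≤ L → ∀ (z x : Fin d → ℤ),
      ∀ (Ω : Type) [MeasurableSpace Ω] (P : Measure Ω) [IsProbabilityMeasure P]
        (X : ℕ → Ω → (Fin d → ℤ)) (τ : ℕ → Ω → ℝ),
        (∀ ω, X 0 ω = x) →
        (∀ n, Measurable (X n)) →
        (∀ n, Measurable (τ n)) →
        (∀ n, P.map (fun ω => (X (n + 1) ω - X n ω, τ n ω))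
            = (srwStep d).prod (expMeasure 1)) →
        iIndepFun
          (fun n ω => (X (n + 1) ω - X n ω, τ n ω)) P →
        ∫⁻ ω, ENNReal.ofReal (Real.exp ((c₀ / (L : ℝ) ^ 2) *
            ((Set.range (fun n => X n ω) ∩ latticeBox d z L).ncard : ℝ))) ∂P ≤ 2 := by
  classical
  refine ⟨rangeExpConst d, rangeExpConst_pos (by omega), ?_⟩
  intro L hL z x Ω _ P _ X τ hX0 hX hτ hmap hind
  have := isProbabilityMeasure_expMeasure one_pos
  set ξ : ℕ → Ω → (Fin d → ℤ) := fun n ω => X (n + 1) ω - X n ω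
  have hξ : ∀ n, Measurable (ξ n) := fun n => (hX (n + 1)).sub (hX n)
  have hlaw : ∀ n, P.map (ξ n) = srwStep d := fun n => by
    have := congrArg (Measure.map Prod.fst) (hmap n)
    rwa [Measure.map_map measurable_fst ((hξ n).prodMk (hτ n)), Measure.map_fst_prod,
      measure_univ, one_smul] at this
  have hwalk : ∀ n ω, X n ω = randomWalk x ξ n ω := fun n ω => by
    rw [randomWalk, Finset.sum_range_sub (fun k => X k ω), hX0, add_sub_cancel]
  set r := ENNReal.ofReal (Real.exp (rangeExpConst d / L ^ 2))
  have hr : 1 ≤ r := ENNReal.one_le_ofReal.2 (Real.one_le_exp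
    (div_nonneg (rangeExpConst_pos (by omega)).le (by positivity)))
  calc _ ≤ ∫⁻ ω, ⨆ n, ∏ k ∈ Finset.range n,
        (if randomWalk x ξ k ω ∈ latticeBox d z L then r else 1) ∂P := lintegral_mono fun ω => by
        rw [mul_comm, Real.exp_nat_mul, ENNReal.ofReal_pow (Real.exp_nonneg _)]
        simpa only [hwalk] using pow_ncard_range_inter_le_iSup_prod _ _ hr
    _ ≤ ENNReal.ofReal (boxLyapunov d L z x) :=
        lintegral_iSup_prod_le (measurable_of_countable _) (measurable_of_countable _) hξ
          (hind.comp (fun _ => Prod.fst) fun _ => measurable_fst) hlaw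
          (srwStep_boxLyapunov_drift hd hL z) (fun y => by split_ifs; exacts [hr, le_rfl])
          (fun y => ENNReal.one_le_ofReal.2 (one_le_boxLyapunov z y)) x
    _ ≤ 2 := by simpa using ENNReal.ofReal_le_ofReal (boxLyapunov_le_two (L := L) z x)
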